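/- Let (N_{r,t})_{r≤t} be a skew convolution semigroup associated with (Q_{r,t}) and let G_t(f,·) be the Radon measure on (−∞,t] induced by the non-increasing function r ↦ J_{r,t}(f). Then there exists a diffuse (atomless) Radon measure ζ on ℝ such that for every t ∈ ℝ and every f ∈ B(E)^+ the atomless part of G_t(f,·) is absolutely continuous with respect to ζ. -/

import Mathlib

/-!
Write `Φ(r) = sup_{u ∈ (r,t]} J_{u,t}(f)`, so that left of `t` the measure `G_t(f,·)` gives `(r,s]`
the mass `Φ(r) - Φ(s)`. Factorising the Laplace functional along
`N_{r,t} = (N_{r,s}Q_{s,t}) * N_{s,t}` gives `J_{r,t}(f) = J_{r,s}(V_{s,t}f) + J_{s,t}(f)`. Since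
`V` and `J` are monotone in `f`, for `q < t` and a constant `m ≥ V_{q,t}f` the increments of
`J_{·,t}(f)` on `(-∞, q]` are dominated by those of `J_{·,q}(m)`, hence `G_t(f,·) ≤ G_q(m,·)` on
`(-∞, q)`. Off the countably many atoms of `G_q(m,·)`, the atomless part of `G_t(f,·)` is then
dominated near every point left of `t` by the atomless part of some `G_q(m,·)` with `q ∈ ℚ`,
`m ∈ ℕ`; it charges neither `{t}` nor `(t, ∞)`. A finite measure equivalent to the sum of these
countably many atomless parts is the required `ζ`.
-/

open MeasureTheory ProbabilityTheory Filter Topology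

noncomputable section

variable {E : Type*} [TopologicalSpace E] [MeasurableSpace E] [BorelSpace E]
  [StandardBorelSpace E]

/-- The Borel σ-algebra of the topology of weak convergence on `M(E)`. -/
instance : MeasurableSpace (FiniteMeasure E) := borel _

/-- `B(E)^+`: bounded non-negative Borel functions on `E`. -/
def Bp (f : E → ℝ) : Prop :=
  Measurable f ∧ (∀ x, 0 ≤ f x) ∧ ∃ C, ∀ x, f x ≤ C

/-- The Laplace functional `L_F(f) = ∫_{M(E)} e^{-ν(f)} F(dν)`. -/
def lap (F : Measure (FiniteMeasure E)) (f : E → ℝ) : ℝ :=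
  ∫ ν, Real.exp (- ∫ x, f x ∂(ν : Measure E)) ∂F

/-- Convolution of two measures on `M(E)`: the image of `F ⊗ G` under `(μ, ν) ↦ μ + ν`. -/
def conv (F G : Measure (FiniteMeasure E)) : Measure (FiniteMeasure E) :=
  (F.prod G).map (fun p => p.1 + p.2)

/-- The functional `J_{r,t}(f) = -log L_{N_{r,t}}(f)`. -/
def Jfun (N : ℝ → ℝ → Measure (FiniteMeasure E)) (r t : ℝ) (f : E → ℝ) : ℝ :=
  - Real.log (lap (N r t) f)

/-- The atomless (diffuse) part of a measure on `ℝ`: its restriction to the set of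
non-atoms. -/
def atomlessPart (μ : Measure ℝ) : Measure ℝ :=
  μ.restrict {x | μ {x} = 0}

open Set

namespace MeasureTheory

theorem countable_setOf_measure_singleton_ne_zero {α : Type*} [MeasurableSpace α]
    [MeasurableSingletonClass α] (μ : Measure α) [SFinite μ] :
    {x | μ {x} ≠ 0}.Countable := by
  simpa only [pos_iff_ne_zero] using Measure.countable_meas_pos_of_disjoint_iUnion (μ := μ)
    (fun x => measurableSet_singleton x) fun _ _ h => disjoint_singleton.2 h

theorem tendsto_measureReal_Iic_nhdsGT (μ : Measure ℝ) [IsFiniteMeasure μ] (a : ℝ) :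
    Tendsto (fun x => μ.real (Iic x)) (𝓝[>] a) (𝓝 (μ.real (Iic a))) := by
  have hIic : ⋂ r > a, Iic r = Iic a := by
    ext x
    simp only [mem_iInter, mem_Iic]
    exact ⟨le_of_forall_gt_imp_ge_of_dense, fun h r hr => h.trans hr.le⟩
  have := tendsto_measure_biInter_gt (μ := μ) (fun r _ => measurableSet_Iic.nullMeasurableSet)
    (fun _ _ _ hij => Iic_subset_Iic.2 hij) ⟨a + 1, lt_add_one a, measure_ne_top μ _⟩
  rw [hIic] at this
  exact (ENNReal.tendsto_toReal (measure_ne_top μ _)).comp this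

theorem measureReal_Iic_add_Ioc (μ : Measure ℝ) [IsFiniteMeasure μ] {a b : ℝ} (hab : a ≤ b) :
    μ.real (Iic a) + μ.real (Ioc a b) = μ.real (Iic b) := by
  rw [← measureReal_union (Iic_disjoint_Ioc le_rfl) measurableSet_Ioc, Iic_union_Ioc_eq_Iic hab]

namespace Measure

/-- `ν - μ` is the Stieltjes measure of the difference of the distribution functions. -/
theorem le_of_forall_measure_Ioc_le {μ ν : Measure ℝ} [IsFiniteMeasure μ] [IsFiniteMeasure ν]
    (h : ∀ a b, a < b → μ (Ioc a b) ≤ ν (Ioc a b)) : μ ≤ ν := by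
  have hreal : ∀ a b, a ≤ b → μ.real (Ioc a b) ≤ ν.real (Ioc a b) := fun a b hab => by
    rcases hab.eq_or_lt with rfl | hab
    · simp
    · exact ENNReal.toReal_mono (measure_ne_top ν _) (h a b hab)
  let F : StieltjesFunction ℝ :=
    { toFun := fun x => ν.real (Iic x) - μ.real (Iic x)
      mono' := fun a b hab => by
        have := hreal a b hab
        dsimp only
        rw [← measureReal_Iic_add_Ioc μ hab, ← measureReal_Iic_add_Ioc ν hab]
        linarith
      right_continuous' := fun a => continuousWithinAt_Ioi_iff_Ici.1
        ((tendsto_measureReal_Iic_nhdsGT ν a).sub (tendsto_measureReal_Iic_nhdsGT μ a)) }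
  have hν : ν = μ + F.measure := by
    refine ext_of_Ioc _ _ fun a b hab => ?_
    rw [add_apply, F.measure_Ioc, ← ofReal_measureReal (measure_ne_top μ _),
      ← ofReal_measureReal (measure_ne_top ν _), ← ENNReal.ofReal_add measureReal_nonneg
        (sub_nonneg.2 (F.mono hab.le))]
    congr 1
    change _ = _ + ((ν.real (Iic b) - μ.real (Iic b)) - (ν.real (Iic a) - μ.real (Iic a)))
    rw [← measureReal_Iic_add_Ioc μ hab.le, ← measureReal_Iic_add_Ioc ν hab.le]
    ring
  rw [hν]
  exact Measure.le_add_right le_rfl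

theorem restrict_Ioc_le_of_forall_measure_Ioc_le {μ ν : Measure ℝ}
    [IsLocallyFiniteMeasure μ] [IsLocallyFiniteMeasure ν] {a b : ℝ}
    (h : ∀ c d, a ≤ c → c < d → d ≤ b → μ (Ioc c d) ≤ ν (Ioc c d)) :
    μ.restrict (Ioc a b) ≤ ν.restrict (Ioc a b) := by
  have := isFiniteMeasure_restrict.2 (measure_Ioc_lt_top (μ := μ) (a := a) (b := b)).ne
  have := isFiniteMeasure_restrict.2 (measure_Ioc_lt_top (μ := ν) (a := a) (b := b)).ne
  refine le_of_forall_measure_Ioc_le fun c d _ => ?_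
  rw [restrict_apply measurableSet_Ioc, restrict_apply measurableSet_Ioc, Ioc_inter_Ioc]
  rcases lt_or_ge (max c a) (min d b) with hlt | hge
  · exact h _ _ (le_max_right _ _) hlt (min_le_right _ _)
  · simp [Ioc_eq_empty hge.not_gt]

theorem absolutelyContinuous_sum_of_forall_nhds {α ι : Type*} [TopologicalSpace α]
    [SecondCountableTopology α] [MeasurableSpace α] {ρ : Measure α} {μ : ι → Measure α}
    {s : Set α} (hs : ρ sᶜ = 0) (h : ∀ x ∈ s, ∃ i, ∃ u ∈ 𝓝 x, ρ.restrict u ≪ μ i) :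
    ρ ≪ sum μ := by
  refine AbsolutelyContinuous.mk fun A hA hA0 => ?_
  rw [sum_apply _ hA, ENNReal.tsum_eq_zero] at hA0
  have hAs : ρ (A ∩ s) = 0 := measure_null_of_locally_null _ fun x hx => by
    obtain ⟨i, u, hu, hρu⟩ := h x hx.2
    refine ⟨A ∩ s ∩ u, inter_mem_nhdsWithin _ hu,
      measure_mono_null (inter_subset_inter_left u inter_subset_left) ?_⟩
    rw [← restrict_apply hA]
    exact hρu (hA0 i)
  rw [← inter_union_sdiff A s]
  exact measure_union_null hAs (measure_mono_null (fun _ hy => hy.2) hs)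

end Measure

end MeasureTheory

theorem tendsto_nhdsGT_iSup_Ioc {φ : ℝ → ℝ} {c t : ℝ} (hct : c < t)
    (hφ : AntitoneOn φ (Icc c t)) : Tendsto φ (𝓝[>] c) (𝓝 (⨆ u : Ioc c t, φ u)) := by
  have : Nonempty (Ioc c t) := (nonempty_Ioc.2 hct).to_subtype
  have hbdd : BddAbove (range fun u : Ioc c t => φ u) :=
    ⟨φ c, forall_mem_range.2 fun u => hφ ⟨le_rfl, hct.le⟩ ⟨u.2.1.le, u.2.2⟩ u.2.1.le⟩
  rw [tendsto_order]
  constructor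
  · intro a ha
    obtain ⟨u, hu⟩ := exists_lt_of_lt_ciSup ha
    filter_upwards [Ioc_mem_nhdsGT u.2.1] with v hv
    exact hu.trans_le (hφ ⟨hv.1.le, hv.2.trans u.2.2⟩ ⟨u.2.1.le, u.2.2⟩ hv.2)
  · intro a ha
    filter_upwards [Ioc_mem_nhdsGT hct] with v hv
    exact (le_ciSup hbdd ⟨v, hv⟩).trans_lt ha

theorem iSup_Ioc_sub_le {φ ψ : ℝ → ℝ} {c d q t : ℝ} (hcd : c ≤ d) (hdq : d < q) (hqt : q ≤ t)
    (hφ : AntitoneOn φ (Iic t)) (hψ : AntitoneOn ψ (Iic q))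
    (h : ∀ c' d', c' ≤ d' → d' ≤ q → φ c' - φ d' ≤ ψ c' - ψ d') :
    (⨆ u : Ioc c t, φ u) - (⨆ u : Ioc d t, φ u) ≤ (⨆ u : Ioc c q, ψ u) - (⨆ u : Ioc d q, ψ u) := by
  rcases hcd.eq_or_lt with rfl | hcd
  · simp
  have lim : ∀ {χ : ℝ → ℝ} {T : ℝ}, q ≤ T → AntitoneOn χ (Iic T) →
      Tendsto (fun p : ℝ × ℝ => χ p.1 - χ p.2) (𝓝[>] c ×ˢ 𝓝[>] d)
        (𝓝 ((⨆ u : Ioc c T, χ u) - (⨆ u : Ioc d T, χ u))) := fun hqT hχ =>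
    ((tendsto_nhdsGT_iSup_Ioc (hcd.trans (hdq.trans_le hqT)) (hχ.mono Icc_subset_Iic_self)).comp
      tendsto_fst).sub
    ((tendsto_nhdsGT_iSup_Ioc (hdq.trans_le hqT) (hχ.mono Icc_subset_Iic_self)).comp tendsto_snd)
  refine le_of_tendsto_of_tendsto (lim hqt hφ) (lim le_rfl hψ) ?_
  filter_upwards [prod_mem_prod (Ioo_mem_nhdsGT hcd) (Ioo_mem_nhdsGT hdq)] with p hp
  exact h p.1 p.2 (hp.1.2.trans hp.2.1).le hp.2.2.le

instance (μ : Measure ℝ) : NullSingletonClass (atomlessPart μ) where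
  measure_singleton x := by
    rw [atomlessPart, Measure.restrict_apply (measurableSet_singleton x)]
    by_cases hx : μ {x} = 0
    · exact measure_mono_null inter_subset_left hx
    · rw [singleton_inter_eq_empty.2 (show x ∉ {y | μ {y} = 0} from hx), measure_empty]

theorem atomlessPart_le_self (μ : Measure ℝ) : atomlessPart μ ≤ μ :=
  Measure.restrict_le_self

/-- `ν` has only countably many atoms, and the atomless part of `μ` does not see them. -/
theorem atomlessPart_restrict_absolutelyContinuous {μ ν : Measure ℝ} [SFinite ν] {U : Set ℝ}
    (hU : MeasurableSet U) (h : μ.restrict U ≤ ν.restrict U) :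
    (atomlessPart μ).restrict U ≪ atomlessPart ν := by
  refine Measure.AbsolutelyContinuous.mk fun A hA hνA => ?_
  set S := {x | ν {x} = 0}
  rw [atomlessPart, Measure.restrict_apply hA] at hνA
  have hatoms : atomlessPart μ ((A ∩ U) \ S) = 0 :=
    measure_mono_null (fun x hx => hx.2)
      ((countable_setOf_measure_singleton_ne_zero ν).measure_zero _)
  have hnonatoms : atomlessPart μ (A ∩ U ∩ S) = 0 := by
    refine le_antisymm ?_ zero_le
    calc atomlessPart μ (A ∩ U ∩ S) ≤ μ.restrict U (A ∩ S) := by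
          rw [Measure.restrict_apply' hU]
          exact (atomlessPart_le_self μ _).trans
            (measure_mono fun x hx => ⟨⟨hx.1.1, hx.2⟩, hx.1.2⟩)
      _ ≤ ν.restrict U (A ∩ S) := Measure.le_iff'.1 h _
      _ ≤ ν (A ∩ S) := Measure.restrict_le_self _
      _ = 0 := hνA
  rw [Measure.restrict_apply hA, ← inter_union_sdiff (A ∩ U) S]
  exact measure_union_null hnonatoms hatoms

section SkewConvolution

omit [StandardBorelSpace E]

omit [TopologicalSpace E] [BorelSpace E] in
theorem Bp.integrable {f : E → ℝ} (hf : Bp f) (μ : Measure E) [IsFiniteMeasure μ] :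
    Integrable f μ := by
  obtain ⟨hm, hnn, C, hC⟩ := hf
  refine .of_bound hm.aestronglyMeasurable C (ae_of_all _ fun x => ?_)
  rw [Real.norm_of_nonneg (hnn x)]
  exact hC x

theorem integrable_of_lap_ne_zero {F : Measure (FiniteMeasure E)} {f : E → ℝ}
    (h : lap F f ≠ 0) :
    Integrable (fun ν : FiniteMeasure E => Real.exp (-∫ x, f x ∂(ν : Measure E))) F := by
  by_contra hf
  exact h (integral_undef hf)

theorem lap_le_one {F : Measure (FiniteMeasure E)} [IsProbabilityMeasure F] {f : E → ℝ}
    (hf : Bp f) : lap F f ≤ 1 := by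
  refine (integral_mono_of_nonneg (ae_of_all _ fun ν => (Real.exp_pos _).le)
    (integrable_const (1 : ℝ)) (ae_of_all _ fun ν => ?_)).trans_eq (by simp)
  exact Real.exp_le_one_iff.2 (neg_nonpos.2 (integral_nonneg hf.2.1))

theorem lap_anti {F : Measure (FiniteMeasure E)} {f g : E → ℝ} (hf : Bp f) (hg : Bp g)
    (hfg : f ≤ g) (hFf : lap F f ≠ 0) : lap F g ≤ lap F f := by
  refine integral_mono_of_nonneg (ae_of_all _ fun ν => (Real.exp_pos _).le)
    (integrable_of_lap_ne_zero hFf) (ae_of_all _ fun ν => ?_)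
  have := ν.2
  exact Real.exp_le_exp.2 (neg_le_neg (integral_mono (hf.integrable _) (hg.integrable _) hfg))

/-- `h` excludes the junk value `0` of a non-integrable integral; this yields the
a.e.-measurability of addition and of the integrand without measurability results on
`FiniteMeasure E`. -/
theorem lap_conv {F G : Measure (FiniteMeasure E)} [SFinite F] [SFinite G] {f : E → ℝ}
    (hf : Bp f) (h : lap (conv F G) f ≠ 0) : lap (conv F G) f = lap F f * lap G f := by
  have hadd : AEMeasurable (fun p : FiniteMeasure E × FiniteMeasure E => p.1 + p.2)
      (F.prod G) := by
    by_contra hadd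
    simp [lap, conv, Measure.map_of_not_aemeasurable hadd] at h
  rw [lap, conv, integral_map hadd (integrable_of_lap_ne_zero h).aestronglyMeasurable]
  refine (integral_congr_ae (ae_of_all _ fun p => ?_)).trans (integral_prod_mul _ _)
  have := p.1.2
  have := p.2.2
  simp only [FiniteMeasure.toMeasure_add,
    integral_add_measure (hf.integrable (p.1 : Measure E)) (hf.integrable (p.2 : Measure E)),
    neg_add, Real.exp_add]

theorem lap_comp {m : Measure (FiniteMeasure E)} {κ : Kernel (FiniteMeasure E) (FiniteMeasure E)}
    {f : E → ℝ} (h : lap (κ ∘ₘ m) f ≠ 0) : lap (κ ∘ₘ m) f = ∫ ν, lap (κ ν) f ∂m := by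
  rw [lap, Measure.comp_eq_comp_const_apply, Kernel.integral_comp]
  · rfl
  · rw [← Measure.comp_eq_comp_const_apply]
    exact integrable_of_lap_ne_zero h

theorem cumulant_mono {κ : Kernel (FiniteMeasure E) (FiniteMeasure E)} {v : (E → ℝ) → E → ℝ}
    (hv : ∀ f, Bp f → Bp (v f))
    (hκ : ∀ (μ : FiniteMeasure E) f, Bp f →
      lap (κ μ) f = Real.exp (-∫ x, v f x ∂(μ : Measure E)))
    {f g : E → ℝ} (hf : Bp f) (hg : Bp g) (hfg : f ≤ g) : v f ≤ v g := by
  intro x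
  let δ : FiniteMeasure E := ⟨Measure.dirac x, inferInstance⟩
  have hlap : ∀ h, Bp h → lap (κ δ) h = Real.exp (-v h x) := fun h hh => by
    rw [hκ δ h hh, show (δ : Measure E) = Measure.dirac x from rfl,
      integral_dirac' _ x (hv h hh).1.stronglyMeasurable]
  have := lap_anti hf hg hfg (by rw [hlap f hf]; exact (Real.exp_pos _).ne')
  rw [hlap f hf, hlap g hg, Real.exp_le_exp] at this
  linarith

structure IsSkewConvolutionSemigroup (Q : ℝ → ℝ → Kernel (FiniteMeasure E) (FiniteMeasure E))
    (V : ℝ → ℝ → (E → ℝ) → E → ℝ) (N : ℝ → ℝ → Measure (FiniteMeasure E)) : Prop where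
  isMarkovKernel : ∀ r t, r ≤ t → IsMarkovKernel (Q r t)
  bp_cumulant : ∀ r t f, r ≤ t → Bp f → Bp (V r t f)
  lap_kernel : ∀ r t, r ≤ t → ∀ (μ : FiniteMeasure E) f, Bp f →
    lap ((Q r t) μ) f = Real.exp (-∫ x, V r t f x ∂(μ : Measure E))
  isProbabilityMeasure : ∀ r t, r ≤ t → IsProbabilityMeasure (N r t)
  lap_pos : ∀ r t f, r ≤ t → Bp f → 0 < lap (N r t) f
  conv_eq : ∀ r s t, r ≤ s → s ≤ t → N r t = conv (Q s t ∘ₘ N r s) (N s t)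

namespace IsSkewConvolutionSemigroup

variable {Q : ℝ → ℝ → Kernel (FiniteMeasure E) (FiniteMeasure E)} {V : ℝ → ℝ → (E → ℝ) → E → ℝ}
  {N : ℝ → ℝ → Measure (FiniteMeasure E)} (hS : IsSkewConvolutionSemigroup Q V N)
  {r s t : ℝ} {f g : E → ℝ}
include hS

theorem lap_eq_mul (hrs : r ≤ s) (hst : s ≤ t) (hf : Bp f) :
    lap (N r t) f = lap (N r s) (V s t f) * lap (N s t) f := by
  have := hS.isProbabilityMeasure r s hrs
  have := hS.isProbabilityMeasure s t hst
  have := hS.isMarkovKernel s t hst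
  have hpos := hS.lap_pos r t f (hrs.trans hst) hf
  rw [hS.conv_eq r s t hrs hst] at hpos ⊢
  have hsplit := lap_conv hf hpos.ne'
  rw [hsplit] at hpos ⊢
  rw [lap_comp (left_ne_zero_of_mul hpos.ne')]
  congr 1
  exact integral_congr_ae (ae_of_all _ fun ν => hS.lap_kernel s t hst ν f hf)

theorem jfun_eq_add (hrs : r ≤ s) (hst : s ≤ t) (hf : Bp f) :
    Jfun N r t f = Jfun N r s (V s t f) + Jfun N s t f := by
  rw [Jfun, Jfun, Jfun, hS.lap_eq_mul hrs hst hf,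
    Real.log_mul (hS.lap_pos r s _ hrs (hS.bp_cumulant s t f hst hf)).ne'
      (hS.lap_pos s t f hst hf).ne']
  ring

theorem jfun_nonneg (hrt : r ≤ t) (hf : Bp f) : 0 ≤ Jfun N r t f := by
  have := hS.isProbabilityMeasure r t hrt
  exact neg_nonneg.2 (Real.log_nonpos (hS.lap_pos r t f hrt hf).le (lap_le_one hf))

theorem jfun_mono (hrt : r ≤ t) (hf : Bp f) (hg : Bp g) (hfg : f ≤ g) :
    Jfun N r t f ≤ Jfun N r t g :=
  neg_le_neg (Real.log_le_log (hS.lap_pos r t g hrt hg)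
    (lap_anti hf hg hfg (hS.lap_pos r t f hrt hf).ne'))

theorem antitoneOn_jfun (hf : Bp f) : AntitoneOn (fun r => Jfun N r t f) (Iic t) := by
  intro r _ s hs hrs
  have := hS.jfun_eq_add hrs hs hf
  have := hS.jfun_nonneg hrs (hS.bp_cumulant s t f hs hf)
  dsimp only
  linarith

/-- Both increments are `J_{c,d}` of `V_{d,q}` applied to `V_{q,t} f`, resp. to `m`. -/
theorem jfun_sub_le {c d q : ℝ} {m : E → ℝ} (hcd : c ≤ d) (hdq : d ≤ q) (hqt : q ≤ t)
    (hf : Bp f) (hm : Bp m) (hfm : V q t f ≤ m) :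
    Jfun N c t f - Jfun N d t f ≤ Jfun N c q m - Jfun N d q m := by
  have hg := hS.bp_cumulant q t f hqt hf
  have hmono : V d q (V q t f) ≤ V d q m :=
    cumulant_mono (hS.bp_cumulant d q · hdq) (hS.lap_kernel d q hdq) hg hm hfm
  have := hS.jfun_mono hcd (hS.bp_cumulant d q _ hdq hg) (hS.bp_cumulant d q _ hdq hm) hmono
  have := hS.jfun_eq_add (hcd.trans hdq) hqt hf
  have := hS.jfun_eq_add hdq hqt hf
  have := hS.jfun_eq_add hcd hdq hg
  have := hS.jfun_eq_add hcd hdq hm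
  linarith

theorem exists_nhds_restrict_absolutelyContinuous {G : ℝ → (E → ℝ) → Measure ℝ}
    (hGfin : ∀ t f, Bp f → IsFiniteMeasureOnCompacts (G t f))
    (hGioc : ∀ t f, Bp f → ∀ r s, r ≤ s → s < t →
      G t f (Set.Ioc r s)
        = ENNReal.ofReal
            ((⨆ u : (Set.Ioc r t : Set ℝ), Jfun N (u : ℝ) t f)
              - (⨆ v : (Set.Ioc s t : Set ℝ), Jfun N (v : ℝ) t f)))
    {x : ℝ} (hf : Bp f) (hxt : x < t) :
    ∃ q : ℚ, ∃ m : ℕ, ∃ u ∈ 𝓝 x,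
      (atomlessPart (G t f)).restrict u ≪ atomlessPart (G q fun _ => m) := by
  obtain ⟨q, hxq, hqt⟩ := exists_rat_btwn hxt
  obtain ⟨b, hxb, hbq⟩ := exists_between hxq
  obtain ⟨C, hC⟩ := (hS.bp_cumulant q t f hqt.le hf).2.2
  have hm : Bp fun _ : E => (⌈C⌉₊ : ℝ) :=
    ⟨measurable_const, fun _ => Nat.cast_nonneg _, _, fun _ => le_rfl⟩
  have := hGfin t f hf
  have := hGfin q _ hm
  refine ⟨q, ⌈C⌉₊, Ioc (x - 1) b, Ioc_mem_nhds (by linarith) hxb,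
    atomlessPart_restrict_absolutelyContinuous measurableSet_Ioc
      (Measure.restrict_Ioc_le_of_forall_measure_Ioc_le fun c d _ hcd hdb => ?_)⟩
  rw [hGioc t f hf c d hcd.le (by linarith), hGioc q _ hm c d hcd.le (by linarith)]
  exact ENNReal.ofReal_le_ofReal (iSup_Ioc_sub_le hcd.le (hdb.trans_lt hbq) hqt.le
    (hS.antitoneOn_jfun hf) (hS.antitoneOn_jfun hm) fun c' d' hcd' hd'q =>
      hS.jfun_sub_le hcd' hd'q hqt.le hf hm fun y => (hC y).trans (Nat.le_ceil C))

end IsSkewConvolutionSemigroup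

end SkewConvolution

theorem exists_diffuse_dominating_measure_general
    (Q : ℝ → ℝ → Kernel (FiniteMeasure E) (FiniteMeasure E))
    (V : ℝ → ℝ → (E → ℝ) → E → ℝ)
    (hQmar : ∀ r t, r ≤ t → IsMarkovKernel (Q r t))
    (hVBp : ∀ r t f, r ≤ t → Bp f → Bp (V r t f))
    (hQlap : ∀ r t, r ≤ t → ∀ (μ : FiniteMeasure E) f, Bp f →
      lap ((Q r t) μ) f = Real.exp (- ∫ x, V r t f x ∂(μ : Measure E)))
    (N : ℝ → ℝ → Measure (FiniteMeasure E))
    (hN : ∀ r t, r ≤ t → IsProbabilityMeasure (N r t))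
    (hpos : ∀ r t f, r ≤ t → Bp f → 0 < lap (N r t) f)
    (hSCS : ∀ r s t, r ≤ s → s ≤ t → N r t = conv ((N r s).bind (Q s t ·)) (N s t))
    (G : ℝ → (E → ℝ) → Measure ℝ)
    (hGfin : ∀ t f, Bp f → IsFiniteMeasureOnCompacts (G t f))
    (hGsupp : ∀ t f, Bp f → G t f (Set.Ioi t) = 0)
    (hGioc : ∀ t f, Bp f → ∀ r s, r ≤ s → s < t →
      G t f (Set.Ioc r s)
        = ENNReal.ofReal
            ((⨆ u : (Set.Ioc r t : Set ℝ), Jfun N (u : ℝ) t f)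
              - (⨆ v : (Set.Ioc s t : Set ℝ), Jfun N (v : ℝ) t f))) :
    ∃ ζ : Measure ℝ, IsFiniteMeasureOnCompacts ζ ∧ (∀ x : ℝ, ζ {x} = 0) ∧
      ∀ t f, Bp f → atomlessPart (G t f) ≪ ζ := by
  have hS : IsSkewConvolutionSemigroup Q V N := ⟨hQmar, hVBp, hQlap, hN, hpos, hSCS⟩
  let μ : ℚ × ℕ → Measure ℝ := fun p => atomlessPart (G p.1 fun _ => p.2)
  have (p : ℚ × ℕ) : SFinite (μ p) := by
    have := hGfin p.1 (fun _ => p.2)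
      ⟨measurable_const, fun _ => p.2.cast_nonneg, p.2, fun _ => le_rfl⟩
    unfold μ atomlessPart
    infer_instance
  refine ⟨(Measure.sum μ).toFinite, inferInstance, fun x => ?_, fun t f hf => ?_⟩
  · rw [toFinite_apply_eq_zero_iff, Measure.sum_apply _ (measurableSet_singleton x)]
    exact ENNReal.tsum_eq_zero.2 fun p => measure_singleton x
  refine (Measure.absolutelyContinuous_sum_of_forall_nhds (s := Iio t) ?_ fun x hx => ?_).trans
    (absolutelyContinuous_toFinite _)
  · rw [compl_Iio, ← Ioi_insert, measure_congr (insert_ae_eq_self t _)]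
    exact le_antisymm ((atomlessPart_le_self _ _).trans_eq (hGsupp t f hf)) zero_le
  · obtain ⟨q, m, u, hu, hρu⟩ := hS.exists_nhds_restrict_absolutelyContinuous hGfin hGioc hf hx
    exact ⟨(q, m), u, hu, hρu⟩

/-- **Lemma 3.4.** For a skew convolution semigroup there is a diffuse Radon measure `ζ` on
`ℝ` such that for all `t` and `f ∈ B(E)^+` the atomless part of `G_t(f,·)` is absolutely
continuous with respect to `ζ`. -/
theorem exists_diffuse_dominating_measure
    (Q : ℝ → ℝ → Kernel (FiniteMeasure E) (FiniteMeasure E))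
    (V : ℝ → ℝ → (E → ℝ) → E → ℝ)
    (hQmar : ∀ r t, r ≤ t → IsMarkovKernel (Q r t))
    (hQid : ∀ t, Q t t = Kernel.id)
    (hQsem : ∀ r s t, r ≤ s → s ≤ t → ∀ μ, (Q r t) μ = ((Q r s) μ).bind (Q s t ·))
    (hVBp : ∀ r t f, r ≤ t → Bp f → Bp (V r t f))
    (hVsem : ∀ r s t f, r ≤ s → s ≤ t → Bp f → V r s (V s t f) = V r t f)
    (hQlap : ∀ r t, r ≤ t → ∀ (μ : FiniteMeasure E) f, Bp f →
      lap ((Q r t) μ) f = Real.exp (- ∫ x, V r t f x ∂(μ : Measure E)))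
    (N : ℝ → ℝ → Measure (FiniteMeasure E))
    (hN : ∀ r t, r ≤ t → IsProbabilityMeasure (N r t))
    (hpos : ∀ r t f, r ≤ t → Bp f → 0 < lap (N r t) f)
    (hSCS : ∀ r s t, r ≤ s → s ≤ t → N r t = conv ((N r s).bind (Q s t ·)) (N s t))
    (G : ℝ → (E → ℝ) → Measure ℝ)
    (hGfin : ∀ t f, Bp f → IsFiniteMeasureOnCompacts (G t f))
    (hGsupp : ∀ t f, Bp f → G t f (Set.Ioi t) = 0)
    (hGioc : ∀ t f, Bp f → ∀ r s, r ≤ s → s < t →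
      G t f (Set.Ioc r s)
        = ENNReal.ofReal
            ((⨆ u : (Set.Ioc r t : Set ℝ), Jfun N (u : ℝ) t f)
              - (⨆ v : (Set.Ioc s t : Set ℝ), Jfun N (v : ℝ) t f)))
    (hGatom : ∀ t f, Bp f →
      G t f {t} = ENNReal.ofReal (⨅ r : (Set.Iio t : Set ℝ), Jfun N (r : ℝ) t f)) :
    ∃ ζ : Measure ℝ, IsFiniteMeasureOnCompacts ζ ∧ (∀ x : ℝ, ζ {x} = 0) ∧
      ∀ t f, Bp f → atomlessPart (G t f) ≪ ζ :=
  exists_diffuse_dominating_measure_general Q V hQmar hVBp hQlap N hN hpos hSCS G hGfin hGsupp hGioc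

end
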